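/- arXiv:2008.11885 — 2 statements merged into one kernel-verified Lean document; each statement's English description precedes it below -/
import Mathlib

section
/- Let n ≥ 1 and let W_n be the n-uplinked mutual dyad. Then the dimension-2 path homology of W_n over any field F has dimension n − 1; that is, β̃_2(W_n) = n − 1. -/
open Finset

/-- The non-regular boundary operator `∂_[p] : R^{V^{p+1}} → R^{V^p}`.
It is the linear map acting on the standard basis by
`∂_[p] e_{(v_0,…,v_p)} = ∑_{j=0}^p (−1)^j e_{(v_0,…,v̂_j,…,v_p)}`,
where `v̂_j` means that the entry `v_j` is omitted from the tuple
(here `fun i => x (j.succAbove i)` is the tuple `x` with its `j`-th entry dropped). -/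
noncomputable def pathBoundary (R V : Type) [CommRing R] [Fintype V] [DecidableEq V]
    (p : ℕ) : ((Fin (p + 1) → V) → R) →ₗ[R] ((Fin p → V) → R) where
  toFun f := fun w => ∑ x : Fin (p + 1) → V,
    (∑ j : Fin (p + 1), (-1 : R) ^ (j : ℕ) *
      (if (fun i => x (j.succAbove i)) = w then 1 else 0)) * f x
  map_add' f g := by
    funext w
    simp [mul_add, Finset.sum_add_distrib]
  map_smul' r f := by
    funext w
    simp [Finset.mul_sum, mul_left_comm]

/-- A tuple of vertices is an allowed path when each consecutive pair is an arc. -/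
def IsAllowed {V : Type} (A : V → V → Prop) {q : ℕ} (x : Fin q → V) : Prop :=
  ∀ (i : ℕ) (h : i + 1 < q), A (x ⟨i, Nat.lt_of_succ_lt h⟩) (x ⟨i + 1, h⟩)

/-- `R^{𝒜}`: the subspace of `R^{V^q}` of functions supported on allowed paths
(`q` is the number of vertices in the tuple, so this is `R^{𝒜_{q-1}}`). -/
def allowedSubmodule (R V : Type) [CommRing R] (A : V → V → Prop) (q : ℕ) :
    Submodule R ((Fin q → V) → R) where
  carrier := {f | ∀ x, ¬ IsAllowed A x → f x = 0}
  add_mem' := fun hf hg x hx => by simp only [Pi.add_apply, hf x hx, hg x hx, add_zero]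
  zero_mem' := fun x hx => rfl
  smul_mem' := fun c f hf x hx => by simp only [Pi.smul_apply, hf x hx, smul_zero]

/-- `Ω_p`, the space of invariant `p`-paths:
`Ω_p = {ω ∈ R^{𝒜_p} : ∂_[p] ω ∈ R^{𝒜_{p−1}}}`. -/
noncomputable def invariantPaths (R V : Type) [CommRing R] [Fintype V] [DecidableEq V]
    (A : V → V → Prop) (p : ℕ) : Submodule R ((Fin (p + 1) → V) → R) :=
  allowedSubmodule R V A (p + 1) ⊓ (allowedSubmodule R V A p).comap (pathBoundary R V p)

/-- The cycles `Z_p = ker ∂_p` of the path complex `(Ω_p, ∂_p)`, `∂_p = ∂_[p]|_{Ω_p}`.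
In degree `0` the complex ends at `Ω_0` (the differential out of `Ω_0` is zero),
so `Z_0 = Ω_0`. -/
noncomputable def pathCycles (R V : Type) [CommRing R] [Fintype V] [DecidableEq V]
    (A : V → V → Prop) : (p : ℕ) → Submodule R ((Fin (p + 1) → V) → R)
  | 0 => invariantPaths R V A 0
  | p + 1 => invariantPaths R V A (p + 1) ⊓ LinearMap.ker (pathBoundary R V (p + 1))

/-- The boundaries `B_p = im ∂_{p+1} = ∂_[p+1](Ω_{p+1})`. -/
noncomputable def pathBoundaries (R V : Type) [CommRing R] [Fintype V] [DecidableEq V]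
    (A : V → V → Prop) (p : ℕ) : Submodule R ((Fin (p + 1) → V) → R) :=
  Submodule.map (pathBoundary R V (p + 1)) (invariantPaths R V A (p + 1))

/-- The path homology `H_p = Z_p / B_p` of the digraph `(V, A)` with coefficients in `R`. -/
abbrev pathHomology (R V : Type) [CommRing R] [Fintype V] [DecidableEq V]
    (A : V → V → Prop) (p : ℕ) : Type :=
  pathCycles R V A p ⧸ (pathBoundaries R V A p).comap (pathCycles R V A p).subtype

/-- The Betti numbers `β_p = dim H_p`. -/
noncomputable def betti (F V : Type) [Field F] [Fintype V] [DecidableEq V]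
    (A : V → V → Prop) (p : ℕ) : ℕ :=
  Module.finrank F (pathHomology F V A p)

/-- The reduced Betti numbers `β̃_p = β_p − δ_{p0}` (as integers). -/
noncomputable def tildeBetti (F V : Type) [Field F] [Fintype V] [DecidableEq V]
    (A : V → V → Prop) (p : ℕ) : ℤ :=
  (betti F V A p : ℤ) - (if p = 0 then 1 else 0)

/-- For `n ≥ 1`, the `n`-uplinked mutual dyad `W_n` has vertex set `{a, b, 1, …, n}`
(realized as `Fin 2 ⊕ Fin n`, with `a = Sum.inl 0` and `b = Sum.inl 1`) and arc set
`{(a,b), (b,a)} ∪ {(a,i) : 1 ≤ i ≤ n} ∪ {(b,i) : 1 ≤ i ≤ n}`. -/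
def uplinkArc (n : ℕ) : (Fin 2 ⊕ Fin n) → (Fin 2 ⊕ Fin n) → Prop
  | Sum.inl i, Sum.inl j => i ≠ j
  | Sum.inl _, Sum.inr _ => True
  | Sum.inr _, _ => False

/-- The `n`-downlinked mutual dyad: the `n`-uplinked mutual dyad with all arcs reversed. -/
def downlinkArc (n : ℕ) (u v : Fin 2 ⊕ Fin n) : Prop := uplinkArc n v u

/-! In `W_n` the vertices `i` are sinks, so every allowed 3-path has the form `(c, d, c, t)` with
`{c, d} = {a, b}`. For `ω ∈ Ω_3` the non-allowed 2-path `(c, c, t)` occurs in `∂ω` only through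
`(c, d, c, t)`, so `Ω_3 = 0` and `H_2 = Z_2`. A 2-cycle `ω` is determined by its values `x_i` on
the paths `(a, b, i)`: `∂ω = 0` forces the value on `(b, a, i)` to be `x_i`, the values on
`(a, b, a)` and `(b, a, b)` to vanish, and `∑ x_i = 0`; conversely `∑ x_i ((a, b, i) + (b, a, i))`
has boundary `(∑ x_i) ((a, b) + (b, a))`. Hence `Z_2` is the hyperplane `∑ x_i = 0` of `F^n`. -/

section PathComplex

variable {R V : Type} [CommRing R] [Fintype V] [DecidableEq V]

lemma pathBoundary_apply (p : ℕ) (f : (Fin (p + 1) → V) → R) (w : Fin p → V) :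
    pathBoundary R V p f w =
      ∑ j : Fin (p + 1), (-1 : R) ^ (j : ℕ) * ∑ v : V, f (j.insertNth v w) := by
  change ∑ x : Fin (p + 1) → V, (∑ j : Fin (p + 1), (-1 : R) ^ (j : ℕ) *
      (if (fun i => x (j.succAbove i)) = w then 1 else 0)) * f x = _
  simp_rw [Finset.sum_mul, mul_assoc, ite_mul, one_mul, zero_mul]
  rw [Finset.sum_comm]
  refine Finset.sum_congr rfl fun j _ => ?_
  rw [← Finset.mul_sum]
  congr 1
  rw [← (Fin.insertNthEquiv (fun _ => V) j).sum_comp]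
  simp [Fin.insertNthEquiv, Fintype.sum_prod_type, Finset.sum_ite_eq']

lemma pathBoundary_single (p : ℕ) (x : Fin (p + 1) → V) (c : R) :
    pathBoundary R V p (Pi.single x c) =
      ∑ j : Fin (p + 1), (-1 : R) ^ (j : ℕ) • Pi.single (fun i => x (j.succAbove i)) c := by
  funext w
  change ∑ y : Fin (p + 1) → V, (∑ j : Fin (p + 1), (-1 : R) ^ (j : ℕ) *
      (if (fun i => y (j.succAbove i)) = w then 1 else 0)) *
        (Pi.single x c : (Fin (p + 1) → V) → R) y = _
  rw [Finset.sum_eq_single x (fun y _ hy => by rw [Pi.single_eq_of_ne hy, mul_zero])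
    (fun h => absurd (Finset.mem_univ x) h)]
  simp [Finset.sum_mul, Pi.single_apply, eq_comm]

lemma pathBoundary_single_three (u v t : V) (c : R) :
    pathBoundary R V 2 (Pi.single ![u, v, t] c) =
      Pi.single ![v, t] c - Pi.single ![u, t] c + Pi.single ![u, v] c := by
  have drop : ∀ j : Fin 3,
      (fun i => ![u, v, t] (j.succAbove i)) = ![![v, t], ![u, t], ![u, v]] j := by
    intro j; funext i; fin_cases j <;> fin_cases i <;> rfl
  simp [pathBoundary_single, drop, Fin.sum_univ_succ, sub_eq_add_neg, add_assoc]

lemma pathBoundary_two_apply (f : (Fin 3 → V) → R) (u v : V) :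
    pathBoundary R V 2 f ![u, v] =
      ∑ x, f ![x, u, v] - ∑ x, f ![u, x, v] + ∑ x, f ![u, v, x] := by
  have h1 : ∀ x, (1 : Fin 3).insertNth x ![u, v] = ![u, x, v] := fun x => by
    funext i; fin_cases i <;> rfl
  have h2 : ∀ x, (2 : Fin 3).insertNth x ![u, v] = ![u, v, x] := fun x => by
    funext i; fin_cases i <;> rfl
  simp [pathBoundary_apply, Fin.sum_univ_three, h1, h2, sub_eq_add_neg]

lemma pathBoundary_three_apply (f : (Fin 4 → V) → R) (u v t : V) :
    pathBoundary R V 3 f ![u, v, t] =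
      ∑ x, f ![x, u, v, t] - ∑ x, f ![u, x, v, t] + ∑ x, f ![u, v, x, t]
        - ∑ x, f ![u, v, t, x] := by
  have h1 : ∀ x, (1 : Fin 4).insertNth x ![u, v, t] = ![u, x, v, t] := fun x => by
    funext i; fin_cases i <;> rfl
  have h2 : ∀ x, (2 : Fin 4).insertNth x ![u, v, t] = ![u, v, x, t] := fun x => by
    funext i; fin_cases i <;> rfl
  have h3 : ∀ x, (3 : Fin 4).insertNth x ![u, v, t] = ![u, v, t, x] := fun x => by
    funext i; fin_cases i <;> rfl
  simp [pathBoundary_apply, Fin.sum_univ_four, h1, h2, h3, sub_eq_add_neg, pow_succ]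

lemma mem_pathCycles_succ_iff {A : V → V → Prop} {p : ℕ} {f : (Fin (p + 2) → V) → R} :
    f ∈ pathCycles R V A (p + 1) ↔
      f ∈ allowedSubmodule R V A (p + 2) ∧ pathBoundary R V (p + 1) f = 0 := by
  refine ⟨fun ⟨⟨hf, _⟩, hdf⟩ => ⟨hf, hdf⟩, fun ⟨hf, hdf⟩ => ⟨⟨hf, ?_⟩, hdf⟩⟩
  change pathBoundary R V (p + 1) f ∈ allowedSubmodule R V A (p + 1)
  rw [hdf]
  exact Submodule.zero_mem _

end PathComplex

lemma isAllowed_cons_cons {V : Type} {A : V → V → Prop} {q : ℕ} (u v : V) (x : Fin q → V) :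
    IsAllowed A (Matrix.vecCons u (Matrix.vecCons v x)) ↔
      A u v ∧ IsAllowed A (Matrix.vecCons v x) := by
  constructor
  · intro h
    exact ⟨by simpa using h 0 (by omega), fun i hi => h (i + 1) (by omega)⟩
  · rintro ⟨huv, h⟩ (_ | i) hi
    · exact huv
    · exact h i (by omega)

lemma isAllowed_single {V : Type} {A : V → V → Prop} (u : V) : IsAllowed A ![u] :=
  fun i hi => by omega

lemma betti_eq_finrank_pathCycles {F V : Type} [Field F] [Fintype V] [DecidableEq V]
    {A : V → V → Prop} {p : ℕ} (h : invariantPaths F V A (p + 1) = ⊥) :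
    betti F V A p = Module.finrank F (pathCycles F V A p) := by
  have hB : (pathBoundaries F V A p).comap (pathCycles F V A p).subtype = ⊥ := by
    rw [pathBoundaries, h, Submodule.map_bot, Submodule.comap_bot, Submodule.ker_subtype]
  exact (Submodule.quotEquivOfEqBot _ hB).finrank_eq

lemma finrank_ker_linearCombination_one (F ι : Type) [Field F] [Fintype ι] [Nonempty ι] :
    Module.finrank F (LinearMap.ker (Fintype.linearCombination F fun _ : ι => (1 : F))) =
      Fintype.card ι - 1 := by
  classical
  have hne : Fintype.linearCombination F (fun _ : ι => (1 : F)) ≠ 0 := fun h => by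
    simpa using LinearMap.congr_fun h (Pi.single (Classical.arbitrary ι) 1)
  have := Module.Dual.finrank_ker_add_one_of_ne_zero hne
  rw [Module.finrank_fintype_fun_eq_card] at this
  omega

section UplinkedDyad

noncomputable def dyadCycle (F : Type) [Field F] (n : ℕ) :
    (Fin n → F) →ₗ[F] ((Fin 3 → Fin 2 ⊕ Fin n) → F) :=
  Fintype.linearCombination F fun i =>
    Pi.single ![.inl 0, .inl 1, .inr i] 1 + Pi.single ![.inl 1, .inl 0, .inr i] 1

variable {F : Type} [Field F] {n : ℕ}

lemma invariantPaths_uplinkArc_three_eq_bot :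
    invariantPaths F (Fin 2 ⊕ Fin n) (uplinkArc n) 3 = ⊥ := by
  refine eq_bot_iff.mpr fun f ⟨hf, hdf⟩ => funext fun x => ?_
  obtain ⟨u, v, w, t, rfl⟩ : ∃ u v w t, x = ![u, v, w, t] :=
    ⟨x 0, x 1, x 2, x 3, by ext i; fin_cases i <;> rfl⟩
  by_cases hx : IsAllowed (uplinkArc n) ![u, v, w, t]
  swap
  · exact hf _ hx
  obtain ⟨c, d, hcd, rfl, rfl, rfl⟩ :
      ∃ c d : Fin 2, c ≠ d ∧ u = .inl c ∧ v = .inl d ∧ w = .inl c := by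
    rcases u with c | _ <;> rcases v with d | _ <;> rcases w with e | _ <;>
      simp only [isAllowed_cons_cons, uplinkArc, ne_eq, false_and, and_false, and_self] at hx
    obtain ⟨hcd, hde, -⟩ := hx
    refine ⟨c, d, hcd, rfl, rfl, ?_⟩
    fin_cases c <;> fin_cases d <;> fin_cases e <;> simp_all
  have h := hdf ![.inl c, .inl c, t] (by simp [isAllowed_cons_cons, uplinkArc])
  rw [pathBoundary_three_apply] at h
  fin_cases c <;> fin_cases d <;>
    simp_all [Fintype.sum_sum_type, hf _, isAllowed_cons_cons, isAllowed_single, uplinkArc]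

lemma dyadCycle_apply (x : Fin n → F) (w : Fin 3 → Fin 2 ⊕ Fin n) :
    dyadCycle F n x w = ∑ i,
      ((if w = ![.inl 0, .inl 1, .inr i] then x i else 0) +
        (if w = ![.inl 1, .inl 0, .inr i] then x i else 0)) := by
  simp [dyadCycle, Fintype.linearCombination_apply, Pi.single_apply]

lemma dyadCycle_injective : Function.Injective (dyadCycle F n) := fun x y h =>
  funext fun i => by simpa [dyadCycle_apply] using congrFun h ![.inl 0, .inl 1, .inr i]

lemma pathBoundary_dyadCycle (x : Fin n → F) :
    pathBoundary F (Fin 2 ⊕ Fin n) 2 (dyadCycle F n x) =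
      (∑ i, x i) • (Pi.single ![.inl 0, .inl 1] 1 + Pi.single ![.inl 1, .inl 0] 1) := by
  simp only [dyadCycle, Fintype.linearCombination_apply, map_sum, map_smul, map_add,
    pathBoundary_single_three, Finset.sum_smul]
  refine Finset.sum_congr rfl fun i _ => ?_
  congr 1
  abel

lemma dyadCycle_mem_allowedSubmodule (x : Fin n → F) :
    dyadCycle F n x ∈ allowedSubmodule F (Fin 2 ⊕ Fin n) (uplinkArc n) 3 := by
  intro w hw
  rw [dyadCycle_apply]
  refine Finset.sum_eq_zero fun i _ => ?_
  rw [if_neg, if_neg, add_zero] <;>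
    · rintro rfl
      exact hw (by simp [isAllowed_cons_cons, isAllowed_single, uplinkArc])

variable {f : (Fin 3 → Fin 2 ⊕ Fin n) → F}

lemma apply_backtrack_eq_zero_of_mem_pathCycles
    (hf : f ∈ pathCycles F (Fin 2 ⊕ Fin n) (uplinkArc n) 2) {c d : Fin 2} (hcd : c ≠ d) :
    f ![.inl c, .inl d, .inl c] = 0 := by
  obtain ⟨hall, hdf⟩ := mem_pathCycles_succ_iff.1 hf
  have h := congrFun hdf ![.inl c, .inl c]
  rw [pathBoundary_two_apply] at h
  fin_cases c <;> fin_cases d <;>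
    simp_all [Fintype.sum_sum_type, hall _, isAllowed_cons_cons, isAllowed_single, uplinkArc]

lemma apply_swap_of_mem_pathCycles
    (hf : f ∈ pathCycles F (Fin 2 ⊕ Fin n) (uplinkArc n) 2) {c d : Fin 2} (hcd : c ≠ d)
    (i : Fin n) : f ![.inl c, .inl d, .inr i] = f ![.inl d, .inl c, .inr i] := by
  obtain ⟨hall, hdf⟩ := mem_pathCycles_succ_iff.1 hf
  have h := congrFun hdf ![.inl d, .inr i]
  rw [pathBoundary_two_apply] at h
  fin_cases c <;> fin_cases d <;>
    simp_all [Fintype.sum_sum_type, hall _, isAllowed_cons_cons, isAllowed_single, uplinkArc,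
      sub_eq_zero]

lemma sum_apply_uplink_eq_zero_of_mem_pathCycles
    (hf : f ∈ pathCycles F (Fin 2 ⊕ Fin n) (uplinkArc n) 2) :
    ∑ i, f ![.inl 0, .inl 1, .inr i] = 0 := by
  obtain ⟨hall, hdf⟩ := mem_pathCycles_succ_iff.1 hf
  have h := congrFun hdf ![.inl 0, .inl 1]
  rw [pathBoundary_two_apply] at h
  simpa [Fintype.sum_sum_type, hall _, isAllowed_cons_cons, isAllowed_single, uplinkArc,
    apply_backtrack_eq_zero_of_mem_pathCycles hf] using h

lemma pathCycles_uplinkArc_two :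
    pathCycles F (Fin 2 ⊕ Fin n) (uplinkArc n) 2 =
      (LinearMap.ker (Fintype.linearCombination F fun _ : Fin n => (1 : F))).map
        (dyadCycle F n) := by
  ext f
  constructor
  · intro hf
    refine ⟨fun i => f ![.inl 0, .inl 1, .inr i], by
      simpa [Fintype.linearCombination_apply] using sum_apply_uplink_eq_zero_of_mem_pathCycles hf,
      funext fun w => ?_⟩
    by_cases hw : IsAllowed (uplinkArc n) w
    swap
    · rw [dyadCycle_mem_allowedSubmodule _ w hw, (mem_pathCycles_succ_iff.1 hf).1 w hw]
    obtain ⟨u, v, t, rfl⟩ : ∃ u v t, w = ![u, v, t] :=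
      ⟨w 0, w 1, w 2, by ext i; fin_cases i <;> rfl⟩
    rcases u with c | _ <;> rcases v with d | _ <;> rcases t with e | k <;>
      simp only [isAllowed_cons_cons, isAllowed_single, uplinkArc, ne_eq, and_true, and_false,
        false_and, and_self] at hw <;>
      fin_cases c <;> fin_cases d <;> try fin_cases e
    all_goals simp_all [dyadCycle_apply, apply_backtrack_eq_zero_of_mem_pathCycles hf,
      apply_swap_of_mem_pathCycles hf]
  · rintro ⟨x, hx, rfl⟩
    refine mem_pathCycles_succ_iff.2 ⟨dyadCycle_mem_allowedSubmodule x, ?_⟩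
    have hsum : ∑ i, x i = 0 := by simpa [Fintype.linearCombination_apply] using hx
    exact (pathBoundary_dyadCycle x).trans (by rw [hsum, zero_smul])

end UplinkedDyad

/-- For `n ≥ 1` and `W_n` the `n`-uplinked mutual dyad, the dimension-2
path homology of `W_n` over any field `F` has dimension `n − 1`: `β̃_2(W_n) = n − 1`. -/
theorem uplinked_dyad_tildeBetti_two (F : Type) [Field F] (n : ℕ) (hn : 1 ≤ n) :
    tildeBetti F (Fin 2 ⊕ Fin n) (uplinkArc n) 2 = (n : ℤ) - 1 := by
  have : Nonempty (Fin n) := ⟨⟨0, hn⟩⟩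
  have hZ : Module.finrank F (pathCycles F (Fin 2 ⊕ Fin n) (uplinkArc n) 2) = n - 1 := by
    rw [pathCycles_uplinkArc_two, ← LinearEquiv.finrank_eq (Submodule.equivMapOfInjective _
      dyadCycle_injective _), finrank_ker_linearCombination_one, Fintype.card_fin]
  rw [tildeBetti, betti_eq_finrank_pathCycles invariantPaths_uplinkArc_three_eq_bot, hZ]
  omega
end

section
/- Let n ≥ 1 and let W_n be the n-uplinked mutual dyad. Then over any field F, the space of invariant p-paths is trivial for every p ≥ 3: Ω_p(W_n) = {0}. -/
open Finset

lemma succAbove_lt' {m : ℕ} (j : Fin (m+1)) (k : ℕ) (hk : k < m) (h : k < j.val) :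
    j.succAbove ⟨k, hk⟩ = ⟨k, by omega⟩ := by
  rw [Fin.succAbove_of_castSucc_lt _ _ (by simpa [Fin.lt_def] using h)]
  rfl

lemma succAbove_ge' {m : ℕ} (j : Fin (m+1)) (k : ℕ) (hk : k < m) (h : j.val ≤ k) :
    j.succAbove ⟨k, hk⟩ = ⟨k + 1, by omega⟩ := by
  rw [Fin.succAbove_of_le_castSucc _ _ (by simp [Fin.le_def]; omega)]
  rfl

lemma val_one'' {p : ℕ} (hp : 1 ≤ p) : ((1 : Fin (p+1)) : ℕ) = 1 := by
  rw [Fin.val_one']; exact Nat.mod_eq_of_lt (by omega)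

lemma fin2_eq {a b c : Fin 2} (h1 : a ≠ b) (h2 : c ≠ b) : a = c := by
  revert h1 h2; revert a b c; decide

lemma uplink_pair {n p : ℕ} {x : Fin (p+1) → Fin 2 ⊕ Fin n}
    (hx : IsAllowed (uplinkArc n) x) (i : ℕ) (h : i + 2 < p + 1) :
    ∃ c d : Fin 2, x ⟨i, by omega⟩ = Sum.inl c ∧ x ⟨i+1, by omega⟩ = Sum.inl d ∧ c ≠ d := by
  have h1 := hx i (by omega)
  have h2 := hx (i+1) (by omega)
  rcases hv : x ⟨i+1, by omega⟩ with d | d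
  · rcases hu : x ⟨i, by omega⟩ with c | c
    · rw [hu, hv] at h1
      exact ⟨c, d, rfl, rfl, h1⟩
    · rw [hu] at h1
      exact h1.elim
  · rw [hv] at h2
    exact h2.elim

lemma uplink_triple {n p : ℕ} {x : Fin (p+1) → Fin 2 ⊕ Fin n}
    (hx : IsAllowed (uplinkArc n) x) (hp : 3 ≤ p) :
    ∃ c d : Fin 2, x ⟨0, by omega⟩ = Sum.inl c ∧ x ⟨1, by omega⟩ = Sum.inl d ∧ c ≠ d ∧
      x ⟨2, by omega⟩ = Sum.inl c := by
  obtain ⟨c, d, h1, h2, hcd⟩ := uplink_pair hx 0 (by omega)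
  obtain ⟨d', e, h2', h3, hde⟩ := uplink_pair hx 1 (by omega)
  have h1' : x ⟨0, by omega⟩ = Sum.inl c := h1
  have h2'' : x ⟨1, by omega⟩ = Sum.inl d := h2
  have hd : d = d' := Sum.inl.inj ((h2 : x ⟨1, by omega⟩ = _).symm.trans h2')
  subst hd
  have h3' : x ⟨2, by omega⟩ = Sum.inl e := h3
  refine ⟨c, d, h1', h2'', hcd, ?_⟩
  rw [fin2_eq hcd hde.symm]
  exact h3'

lemma face_eq {n p : ℕ} (hp : 3 ≤ p) {x y : Fin (p+1) → Fin 2 ⊕ Fin n}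
    (hx : IsAllowed (uplinkArc n) x) (hy : IsAllowed (uplinkArc n) y) (j : Fin (p+1))
    (h : ∀ i : Fin p, y (j.succAbove i) = x ((1 : Fin (p+1)).succAbove i)) :
    y = x ∧ j = 1 := by
  have h1v : ((1 : Fin (p+1)) : ℕ) = 1 := val_one'' (by omega)
  obtain ⟨c, d, hx0, hx1, hcd, hx2⟩ := uplink_triple hx hp
  have e0 := h ⟨0, by omega⟩
  have e1 := h ⟨1, by omega⟩
  rw [succAbove_lt' (1 : Fin (p+1)) 0 (by omega) (by omega)] at e0
  rw [succAbove_ge' (1 : Fin (p+1)) 1 (by omega) (by omega)] at e1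
  -- e0 : y (j.succAbove ⟨0,_⟩) = x ⟨0,_⟩ ; e1 : y (j.succAbove ⟨1,_⟩) = x ⟨2,_⟩
  rcases Nat.lt_or_ge j.val 1 with hj | hj
  · -- j.val = 0
    rw [succAbove_ge' j 0 (by omega) (by omega)] at e0
    rw [succAbove_ge' j 1 (by omega) (by omega)] at e1
    obtain ⟨c', d', hy1, hy2, hcd'⟩ := uplink_pair hy 1 (by omega)
    have hy2' : y ⟨2, by omega⟩ = Sum.inl d' := hy2
    rw [hy1, hx0] at e0
    rw [hy2', hx2] at e1
    exact absurd (Sum.inl.inj e0 ▸ Sum.inl.inj e1 ▸ rfl : c' = d') hcd'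
  rcases Nat.lt_or_ge j.val 2 with hj2 | hj2
  · -- j.val = 1
    have hjeq : j = 1 := Fin.ext (by rw [h1v]; omega)
    refine ⟨?_, hjeq⟩
    rw [succAbove_lt' j 0 (by omega) (by omega)] at e0
    rw [succAbove_ge' j 1 (by omega) (by omega)] at e1
    have hk : ∀ k : ℕ, 2 ≤ k → ∀ (hkp : k < p + 1), y ⟨k, hkp⟩ = x ⟨k, hkp⟩ := by
      intro k hk2 hkp
      have e := h ⟨k - 1, by omega⟩
      rw [succAbove_ge' j (k-1) (by omega) (by omega),
          succAbove_ge' (1 : Fin (p+1)) (k-1) (by omega) (by omega)] at e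
      have hmk : (⟨k - 1 + 1, by omega⟩ : Fin (p+1)) = ⟨k, hkp⟩ := Fin.ext (by simp; omega)
      rwa [hmk] at e
    obtain ⟨c', d', hy1, hy2, hcd'⟩ := uplink_pair hy 1 (by omega)
    have hy1' : y ⟨1, by omega⟩ = Sum.inl c' := hy1
    have hy2' : y ⟨2, by omega⟩ = Sum.inl d' := hy2
    have hyx2 : y ⟨2, by omega⟩ = x ⟨2, by omega⟩ := hk 2 le_rfl (by omega)
    rw [hyx2, hx2] at hy2'
    have hcd2 : c' ≠ c := by rw [Sum.inl.inj hy2']; exact hcd'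
    have hdc : c' = d := fin2_eq hcd2 hcd.symm
    funext k
    rcases Nat.lt_or_ge k.val 1 with hk0 | hk1
    · have hke : k = ⟨0, by omega⟩ := Fin.ext (show k.val = 0 by omega)
      rw [hke]; exact e0
    rcases Nat.lt_or_ge k.val 2 with hk1' | hk2
    · have hke : k = ⟨1, by omega⟩ := Fin.ext (show k.val = 1 by omega)
      rw [hke, hy1', hx1, hdc]
    · have hke : k = ⟨k.val, k.isLt⟩ := Fin.ext rfl
      rw [hke]; exact hk k.val hk2 k.isLt
  · -- j.val ≥ 2
    rw [succAbove_lt' j 0 (by omega) (by omega)] at e0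
    rw [succAbove_lt' j 1 (by omega) (by omega)] at e1
    obtain ⟨c', d', hy0, hy1, hcd'⟩ := uplink_pair hy 0 (by omega)
    have hy1' : y ⟨1, by omega⟩ = Sum.inl d' := hy1
    rw [hy0, hx0] at e0
    rw [hy1', hx2] at e1
    exact absurd (Sum.inl.inj e0 ▸ Sum.inl.inj e1 ▸ rfl : c' = d') hcd'

/-- For `n ≥ 1` and `W_n` the `n`-uplinked mutual dyad, over any field `F`
the space of invariant `p`-paths is trivial for every `p ≥ 3`: `Ω_p(W_n) = {0}`. -/
theorem uplinked_dyad_invariantPaths_trivial (F : Type) [Field F] (n : ℕ) (hn : 1 ≤ n)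
    (p : ℕ) (hp : 3 ≤ p) :
    invariantPaths F (Fin 2 ⊕ Fin n) (uplinkArc n) p = ⊥ := by

  rw [eq_bot_iff]
  intro ω hω
  simp only [invariantPaths, Submodule.mem_inf, Submodule.mem_comap] at hω
  obtain ⟨h1, h2⟩ := hω
  rw [Submodule.mem_bot]
  funext x
  show ω x = (0 : F)
  by_cases hx : IsAllowed (uplinkArc n) x
  · set w : Fin p → Fin 2 ⊕ Fin n := fun i => x ((1 : Fin (p+1)).succAbove i) with hw
    obtain ⟨c, d, hx0, hx1, hcd, hx2⟩ := uplink_triple hx hp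
    have h1v : ((1 : Fin (p+1)) : ℕ) = 1 := val_one'' (by omega)
    have hwna : ¬ IsAllowed (uplinkArc n) w := by
      intro hall
      have harc := hall 0 (by omega)
      simp only [hw] at harc
      rw [succAbove_lt' (1 : Fin (p+1)) 0 (by omega) (by omega),
          succAbove_ge' (1 : Fin (p+1)) 1 (by omega) (by omega)] at harc
      rw [hx0] at harc
      have hx2' : x ⟨0 + 1 + 1, by omega⟩ = Sum.inl c := hx2
      rw [hx2'] at harc
      exact harc rfl
    have hz : pathBoundary F (Fin 2 ⊕ Fin n) p ω w = 0 := h2 w hwna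
    have hsum : pathBoundary F (Fin 2 ⊕ Fin n) p ω w = - ω x := by
      show (∑ y : Fin (p+1) → Fin 2 ⊕ Fin n,
        (∑ j : Fin (p+1), (-1 : F) ^ (j : ℕ) *
          (if (fun i => y (j.succAbove i)) = w then 1 else 0)) * ω y) = - ω x
      rw [Finset.sum_eq_single x]
      · have hcoef : (∑ j : Fin (p+1), (-1 : F) ^ (j : ℕ) *
            (if (fun i => x (j.succAbove i)) = w then 1 else 0)) = -1 := by
          rw [Finset.sum_eq_single (1 : Fin (p+1))]
          · rw [if_pos hw.symm, h1v, mul_one, pow_one]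
          · intro j _ hj1
            rw [if_neg, mul_zero]
            intro hf
            exact hj1 ((face_eq hp hx hx j (fun i => congrFun (hf.trans hw) i)).2)
          · intro hmem; exact absurd (Finset.mem_univ _) hmem
        rw [hcoef]
        ring
      · intro y _ hyx
        by_cases hy : IsAllowed (uplinkArc n) y
        · have : (∑ j : Fin (p+1), (-1 : F) ^ (j : ℕ) *
              (if (fun i => y (j.succAbove i)) = w then 1 else 0)) = 0 := by
            refine Finset.sum_eq_zero fun j _ => ?_
            rw [if_neg, mul_zero]
            intro hf
            exact hyx (face_eq hp hx hy j (fun i => congrFun (hf.trans hw) i)).1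
          rw [this, zero_mul]
        · rw [h1 y hy, mul_zero]
      · intro hmem; exact absurd (Finset.mem_univ _) hmem
    have : -ω x = 0 := hsum ▸ hz
    exact neg_eq_zero.mp this
  · exact h1 x hx
end
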